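/- Let T and S be bounded linear operators on H such that there exists c > 0 with ‖Tx‖_A ≤ c‖x‖_A and ‖Sx‖_A ≤ c‖x‖_A for all x ∈ H (so that the A-seminorms below are finite). Then ‖T+S‖_A ≤ ∫₀¹ ‖λT + (1−λ)(T+S)/2‖_A dλ + ∫₀¹ ‖λS + (1−λ)(T+S)/2‖_A dλ ≤ ‖T‖_A + ‖S‖_A. -/

import Mathlib

open ContinuousLinearMap

variable {H : Type*} [NormedAddCommGroup H] [InnerProductSpace ℂ H] [CompleteSpace H]

/-- The seminorm on `H` induced by a positive operator `A`: `‖x‖_A = √⟨Ax,x⟩`. -/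
noncomputable def vnA (A : H →L[ℂ] H) (x : H) : ℝ :=
  Real.sqrt (RCLike.re (inner ℂ (A x) x : ℂ))

/-- The `A`-seminorm of an operator: `‖X‖_A = sup {‖Xx‖_A : ‖x‖_A = 1}`. -/
noncomputable def opnA (A : H →L[ℂ] H) (X : H →L[ℂ] H) : ℝ :=
  sSup ((fun x => vnA A (X x)) '' {x : H | vnA A x = 1})

/-- The `A`-numerical radius: `ω_A(X) = sup {|⟨Xx,x⟩_A| : ‖x‖_A = 1}`. -/
noncomputable def wA (A : H →L[ℂ] H) (X : H →L[ℂ] H) : ℝ :=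
  sSup ((fun x => ‖(inner ℂ (A (X x)) x : ℂ)‖) '' {x : H | vnA A x = 1})

/-- `S` is the reduced `A`-adjoint of `T`: `A ∘ S = T* ∘ A` and
`range S ⊆ closure (range A)`. -/
def IsReducedAdjA (A T S : H →L[ℂ] H) : Prop :=
  A ∘L S = (ContinuousLinearMap.adjoint T) ∘L A ∧
    Set.range S ⊆ closure (Set.range (A : H → H))

/-- `X` is `A`-selfadjoint: `A ∘ X = X* ∘ A`. -/
def IsSelfAdjA (A X : H →L[ℂ] H) : Prop :=
  A ∘L X = (ContinuousLinearMap.adjoint X) ∘L A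

/-- `Re_A(T) = (T + T♯)/2`. -/
noncomputable def ReA (T Ts : H →L[ℂ] H) : H →L[ℂ] H := (2 : ℂ)⁻¹ • (T + Ts)

/-- `Im_A(T) = (T - T♯)/(2i)`. -/
noncomputable def ImA (T Ts : H →L[ℂ] H) : H →L[ℂ] H := (2 * Complex.I)⁻¹ • (T - Ts)

/-
Since `‖x‖_A = ‖A^{1/2} x‖`, the map `X ↦ ‖X‖_A` is a seminorm on the operators that are bounded
on the `A`-unit sphere. With `M = (T + S)/2`, the operators `λT + (1-λ)M` and `λS + (1-λ)M` add
up to `T + S` for every `λ`, which integrates to the first inequality. By convexity their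
`A`-seminorms are at most `λ‖T‖_A + (1-λ)‖M‖_A` and `λ‖S‖_A + (1-λ)‖M‖_A`, where
`‖M‖_A ≤ (‖T‖_A + ‖S‖_A)/2`, which integrates to the second. Both integrands are Lipschitz in `λ`.
-/

def IsBoundedA (A X : H →L[ℂ] H) : Prop :=
  ∃ c, ∀ x, vnA A x = 1 → vnA A (X x) ≤ c

section SupOverUnitSphere

variable {E : Type*} [NormedAddCommGroup E] [InnerProductSpace ℂ E]

lemma opnA_nonneg {A : E →L[ℂ] E} (X : E →L[ℂ] E) : 0 ≤ opnA A X :=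
  Real.sSup_nonneg <| by rintro _ ⟨x, -, rfl⟩; exact Real.sqrt_nonneg _

lemma vnA_apply_le_opnA {A X : E →L[ℂ] E} (hX : IsBoundedA A X) {x : E} (hx : vnA A x = 1) :
    vnA A (X x) ≤ opnA A X := by
  obtain ⟨c, hc⟩ := hX
  exact le_csSup ⟨c, by rintro _ ⟨y, hy, rfl⟩; exact hc y hy⟩ ⟨x, hx, rfl⟩

/-- No nonemptiness is needed: for `A = 0` the `A`-unit sphere is empty and
`opnA A X = sSup ∅ = 0`. -/
lemma opnA_le {A X : E →L[ℂ] E} {m : ℝ} (hm : 0 ≤ m) (h : ∀ x, vnA A x = 1 → vnA A (X x) ≤ m) :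
    opnA A X ≤ m :=
  Real.sSup_le (by rintro _ ⟨x, hx, rfl⟩; exact h x hx) hm

end SupOverUnitSphere

section Seminorm

variable {A : H →L[ℂ] H}

lemma vnA_eq_norm_sqrt (hA : A.IsPositive) (x : H) : vnA A x = ‖CFC.sqrt A x‖ := by
  have hsqrt : IsSelfAdjoint (CFC.sqrt A) := .of_nonneg (CFC.sqrt_nonneg A)
  have hAx : A x = CFC.sqrt A (CFC.sqrt A x) :=
    DFunLike.congr_fun
      (CFC.sqrt_mul_sqrt_self A ((ContinuousLinearMap.nonneg_iff_isPositive A).mpr hA)).symm x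
  have hinner : (inner ℂ (A x) x : ℂ) = inner ℂ (CFC.sqrt A x) (CFC.sqrt A x) := by
    rw [hAx]
    exact hsqrt.isSymmetric _ _
  rw [vnA, hinner, inner_self_eq_norm_sq (𝕜 := ℂ), Real.sqrt_sq (norm_nonneg _)]

lemma vnA_add_le (hA : A.IsPositive) (x y : H) : vnA A (x + y) ≤ vnA A x + vnA A y := by
  simpa only [vnA_eq_norm_sqrt hA, map_add] using norm_add_le _ _

lemma vnA_smul (hA : A.IsPositive) (c : ℂ) (x : H) : vnA A (c • x) = ‖c‖ * vnA A x := by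
  simp only [vnA_eq_norm_sqrt hA, map_smul, norm_smul]

lemma opnA_add_le (hA : A.IsPositive) {X Y : H →L[ℂ] H} (hX : IsBoundedA A X)
    (hY : IsBoundedA A Y) : opnA A (X + Y) ≤ opnA A X + opnA A Y :=
  opnA_le (add_nonneg (opnA_nonneg X) (opnA_nonneg Y)) fun _ hx =>
    (vnA_add_le hA _ _).trans (add_le_add (vnA_apply_le_opnA hX hx) (vnA_apply_le_opnA hY hx))

lemma opnA_smul_le (hA : A.IsPositive) {X : H →L[ℂ] H} (hX : IsBoundedA A X) (c : ℂ) :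
    opnA A (c • X) ≤ ‖c‖ * opnA A X :=
  opnA_le (mul_nonneg (norm_nonneg c) (opnA_nonneg X)) fun x hx => by
    rw [smul_apply, vnA_smul hA]
    exact mul_le_mul_of_nonneg_left (vnA_apply_le_opnA hX hx) (norm_nonneg c)

lemma IsBoundedA.add (hA : A.IsPositive) {X Y : H →L[ℂ] H} (hX : IsBoundedA A X)
    (hY : IsBoundedA A Y) : IsBoundedA A (X + Y) :=
  ⟨opnA A X + opnA A Y, fun _ hx =>
    (vnA_add_le hA _ _).trans (add_le_add (vnA_apply_le_opnA hX hx) (vnA_apply_le_opnA hY hx))⟩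

lemma IsBoundedA.smul (hA : A.IsPositive) {X : H →L[ℂ] H} (hX : IsBoundedA A X) (c : ℂ) :
    IsBoundedA A (c • X) :=
  ⟨‖c‖ * opnA A X, fun x hx => by
    rw [smul_apply, vnA_smul hA]
    exact mul_le_mul_of_nonneg_left (vnA_apply_le_opnA hX hx) (norm_nonneg c)⟩

lemma IsBoundedA.sub (hA : A.IsPositive) {X Y : H →L[ℂ] H} (hX : IsBoundedA A X)
    (hY : IsBoundedA A Y) : IsBoundedA A (X - Y) := by
  simpa only [sub_eq_add_neg, neg_one_smul] using hX.add hA (hY.smul hA (-1))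

lemma opnA_half_smul_add_le (hA : A.IsPositive) {X Y : H →L[ℂ] H} (hX : IsBoundedA A X)
    (hY : IsBoundedA A Y) : opnA A ((2 : ℂ)⁻¹ • (X + Y)) ≤ (opnA A X + opnA A Y) / 2 :=
  calc opnA A ((2 : ℂ)⁻¹ • (X + Y)) ≤ ‖(2 : ℂ)⁻¹‖ * opnA A (X + Y) :=
        opnA_smul_le hA (hX.add hA hY) _
    _ ≤ ‖(2 : ℂ)⁻¹‖ * (opnA A X + opnA A Y) := by gcongr; exact opnA_add_le hA hX hY
    _ = (opnA A X + opnA A Y) / 2 := by rw [norm_inv, Complex.norm_two]; ring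

end Seminorm

section ConvexCombination

variable {A P Q : H →L[ℂ] H}

lemma IsBoundedA.smul_add_one_sub_smul (hA : A.IsPositive) (hP : IsBoundedA A P)
    (hQ : IsBoundedA A Q) (l : ℝ) : IsBoundedA A ((l : ℂ) • P + (1 - (l : ℂ)) • Q) :=
  (hP.smul hA _).add hA (hQ.smul hA _)

lemma opnA_smul_add_one_sub_smul_le (hA : A.IsPositive) (hP : IsBoundedA A P)
    (hQ : IsBoundedA A Q) {l : ℝ} (hl : l ∈ Set.Icc (0 : ℝ) 1) :
    opnA A ((l : ℂ) • P + (1 - (l : ℂ)) • Q) ≤ l * opnA A P + (1 - l) * opnA A Q := by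
  have hnorm : ‖1 - (l : ℂ)‖ = 1 - l := by
    rw [← Complex.ofReal_one, ← Complex.ofReal_sub, Complex.norm_real, Real.norm_eq_abs,
      abs_of_nonneg (sub_nonneg.mpr hl.2)]
  calc opnA A ((l : ℂ) • P + (1 - (l : ℂ)) • Q)
      ≤ opnA A ((l : ℂ) • P) + opnA A ((1 - (l : ℂ)) • Q) :=
        opnA_add_le hA (hP.smul hA _) (hQ.smul hA _)
    _ ≤ ‖(l : ℂ)‖ * opnA A P + ‖1 - (l : ℂ)‖ * opnA A Q :=
        add_le_add (opnA_smul_le hA hP _) (opnA_smul_le hA hQ _)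
    _ = l * opnA A P + (1 - l) * opnA A Q := by
        rw [hnorm, Complex.norm_real, Real.norm_eq_abs, abs_of_nonneg hl.1]

lemma lipschitzWith_opnA_smul_add_one_sub_smul (hA : A.IsPositive) (hP : IsBoundedA A P)
    (hQ : IsBoundedA A Q) :
    LipschitzWith (opnA A (P - Q)).toNNReal
      (fun l : ℝ => opnA A ((l : ℂ) • P + (1 - (l : ℂ)) • Q)) := by
  refine LipschitzWith.of_le_add_mul' _ fun l l' => ?_
  have hdiff : (l : ℂ) • P + (1 - (l : ℂ)) • Q
      = ((l' : ℂ) • P + (1 - (l' : ℂ)) • Q) + ((l - l' : ℝ) : ℂ) • (P - Q) := by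
    push_cast
    module
  calc opnA A ((l : ℂ) • P + (1 - (l : ℂ)) • Q)
      ≤ opnA A ((l' : ℂ) • P + (1 - (l' : ℂ)) • Q) + opnA A (((l - l' : ℝ) : ℂ) • (P - Q)) := by
        rw [hdiff]
        exact opnA_add_le hA (hP.smul_add_one_sub_smul hA hQ l') ((hP.sub hA hQ).smul hA _)
    _ ≤ opnA A ((l' : ℂ) • P + (1 - (l' : ℂ)) • Q) + ‖((l - l' : ℝ) : ℂ)‖ * opnA A (P - Q) :=
        add_le_add le_rfl (opnA_smul_le hA (hP.sub hA hQ) _)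
    _ = opnA A ((l' : ℂ) • P + (1 - (l' : ℂ)) • Q) + opnA A (P - Q) * dist l l' := by
        rw [Complex.norm_real, Real.norm_eq_abs, Real.dist_eq, mul_comm]

lemma intervalIntegrable_opnA_smul_add_one_sub_smul (hA : A.IsPositive) (hP : IsBoundedA A P)
    (hQ : IsBoundedA A Q) (a b : ℝ) :
    IntervalIntegrable (fun l : ℝ => opnA A ((l : ℂ) • P + (1 - (l : ℂ)) • Q))
      MeasureTheory.volume a b :=
  (lipschitzWith_opnA_smul_add_one_sub_smul hA hP hQ).continuous.intervalIntegrable a b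

end ConvexCombination

theorem stmt3_general (A T S : H →L[ℂ] H) (hA : A.IsPositive)
    (hc : ∃ c > (0:ℝ), ∀ x : H, vnA A (T x) ≤ c * vnA A x ∧ vnA A (S x) ≤ c * vnA A x) :
    opnA A (T + S) ≤ (∫ l in (0:ℝ)..1, opnA A ((l:ℂ) • T + ((1:ℂ) - (l:ℂ)) • ((2:ℂ)⁻¹ • (T + S)))) + (∫ l in (0:ℝ)..1, opnA A ((l:ℂ) • S + ((1:ℂ) - (l:ℂ)) • ((2:ℂ)⁻¹ • (T + S)))) ∧
    (∫ l in (0:ℝ)..1, opnA A ((l:ℂ) • T + ((1:ℂ) - (l:ℂ)) • ((2:ℂ)⁻¹ • (T + S)))) + (∫ l in (0:ℝ)..1, opnA A ((l:ℂ) • S + ((1:ℂ) - (l:ℂ)) • ((2:ℂ)⁻¹ • (T + S)))) ≤ opnA A T + opnA A S := by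
  obtain ⟨c, -, hcb⟩ := hc
  have hT : IsBoundedA A T := ⟨c, fun x hx => by simpa [hx] using (hcb x).1⟩
  have hS : IsBoundedA A S := ⟨c, fun x hx => by simpa [hx] using (hcb x).2⟩
  set M : H →L[ℂ] H := (2 : ℂ)⁻¹ • (T + S) with hM_def
  have hM : IsBoundedA A M := (hT.add hA hS).smul hA _
  have hTM := intervalIntegrable_opnA_smul_add_one_sub_smul hA hT hM 0 1
  have hSM := intervalIntegrable_opnA_smul_add_one_sub_smul hA hS hM 0 1
  have hsplit_le : ∀ l : ℝ, opnA A (T + S) ≤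
      opnA A ((l : ℂ) • T + (1 - (l : ℂ)) • M) + opnA A ((l : ℂ) • S + (1 - (l : ℂ)) • M) := by
    intro l
    have hsplit :
        ((l : ℂ) • T + (1 - (l : ℂ)) • M) + ((l : ℂ) • S + (1 - (l : ℂ)) • M) = T + S := by
      rw [hM_def]; module
    rw [← hsplit]
    exact opnA_add_le hA (hT.smul_add_one_sub_smul hA hM l) (hS.smul_add_one_sub_smul hA hM l)
  have hconvex_le : ∀ l ∈ Set.Icc (0 : ℝ) 1,
      opnA A ((l : ℂ) • T + (1 - (l : ℂ)) • M) + opnA A ((l : ℂ) • S + (1 - (l : ℂ)) • M) ≤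
        opnA A T + opnA A S := fun l hl => by
    have hM_le : opnA A M ≤ (opnA A T + opnA A S) / 2 := opnA_half_smul_add_le hA hT hS
    linarith [opnA_smul_add_one_sub_smul_le hA hT hM hl, opnA_smul_add_one_sub_smul_le hA hS hM hl,
      mul_le_mul_of_nonneg_left hM_le (sub_nonneg.mpr hl.2)]
  rw [← intervalIntegral.integral_add hTM hSM]
  constructor
  · calc opnA A (T + S) = ∫ _ in (0 : ℝ)..1, opnA A (T + S) := by simp
      _ ≤ _ := intervalIntegral.integral_mono_on zero_le_one intervalIntegrable_const
          (hTM.add hSM) fun l _ => hsplit_le l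
  · calc _ ≤ ∫ _ in (0 : ℝ)..1, opnA A T + opnA A S :=
          intervalIntegral.integral_mono_on zero_le_one (hTM.add hSM) intervalIntegrable_const
            hconvex_le
      _ = opnA A T + opnA A S := by simp

theorem stmt3 (A T S : H →L[ℂ] H) (hA : A.IsPositive) (hA0 : A ≠ 0)
    (hc : ∃ c > (0:ℝ), ∀ x : H, vnA A (T x) ≤ c * vnA A x ∧ vnA A (S x) ≤ c * vnA A x) :
    opnA A (T + S) ≤ (∫ l in (0:ℝ)..1, opnA A ((l:ℂ) • T + ((1:ℂ) - (l:ℂ)) • ((2:ℂ)⁻¹ • (T + S)))) + (∫ l in (0:ℝ)..1, opnA A ((l:ℂ) • S + ((1:ℂ) - (l:ℂ)) • ((2:ℂ)⁻¹ • (T + S)))) ∧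
    (∫ l in (0:ℝ)..1, opnA A ((l:ℂ) • T + ((1:ℂ) - (l:ℂ)) • ((2:ℂ)⁻¹ • (T + S)))) + (∫ l in (0:ℝ)..1, opnA A ((l:ℂ) • S + ((1:ℂ) - (l:ℂ)) • ((2:ℂ)⁻¹ • (T + S)))) ≤ opnA A T + opnA A S :=
  stmt3_general A T S hA hc
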